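/- For all k ≥ 5 and n ≥ C(k−1,2) + 2, the poset (under the weak order) of matroids on E(K_n) in which the edge set of every k-cycle is a circuit has at least two distinct maximal elements. -/

import Mathlib

open Set

variable {α : Type*}

/-- `C` is a circuit of `M`: a minimal dependent subset of the ground set. -/
def Matroid.IsCircuit' (M : Matroid α) (C : Set α) : Prop :=
  C ⊆ M.E ∧ ¬ M.Indep C ∧ ∀ e ∈ C, M.Indep (C \ {e})

/-- `M` is an `X`-matroid on `E`: a matroid with ground set `E` in which every member of the
family `X` is a circuit. -/
def IsXMatroid (E : Set α) (X : Set (Set α)) (M : Matroid α) : Prop :=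
  M.E = E ∧ ∀ C ∈ X, M.IsCircuit' C

/-- The union of a list of sets. -/
def unionList (S : List (Set α)) : Set α := ⋃ Y ∈ S, Y

/-- A proper `X`-sequence: a list of members of `X` such that no term is contained in the
union of the preceding terms. -/
def ProperSeq (X : Set (Set α)) (S : List (Set α)) : Prop :=
  (∀ Y ∈ S, Y ∈ X) ∧
  ∀ i : Fin S.length, 0 < i.1 → ¬ (S.get i ⊆ unionList (S.take i.1))

/-- `val(F, S) = |F ∪ ⋃ S| - |S|`. -/
noncomputable def valSeq (F : Set α) (S : List (Set α)) : ℤ :=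
  ((F ∪ unionList S).ncard : ℤ) - S.length

/-- `val_X(F)`: the minimum of `val(F, S)` over all proper `X`-sequences `S`. -/
noncomputable def valX (X : Set (Set α)) (F : Set α) : ℤ :=
  sInf {v : ℤ | ∃ S : List (Set α), ProperSeq X S ∧ v = valSeq F S}

/-- The rank of a set `F` in a matroid `M`: the largest size of an independent subset of `F`. -/
noncomputable def mrk (M : Matroid α) (F : Set α) : ℕ :=
  sSup {n : ℕ | ∃ I ⊆ F, M.Indep I ∧ I.ncard = n}

/-- The weak order on matroids: `M ⪯ N` iff every independent set of `M` is independent in `N`. -/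
def WeakLE (M N : Matroid α) : Prop := ∀ I : Set α, M.Indep I → N.Indep I

/-- The edge sets of cycles of length `k` in the complete graph `K_n`. -/
def cycleCopies (n k : ℕ) : Set (Set (Sym2 (Fin n))) :=
  {F | ∃ f : ZMod k ↪ Fin n, F = Set.range fun i : ZMod k => s(f i, f (i + 1))}

/-!
The cycle matroid of `K_n` and the sparse paving matroid of rank `k` whose circuit-hyperplanes
are the `k`-cycles are both `C_k`-matroids; take a maximal `C_k`-matroid above each. If the two
coincided, that matroid `M` would contain the independent sets of both. Let `x₀, …, x_{k-2}` be
distinct vertices. The path `x₀ ⋯ x_{k-2}` with the chords `x₀x₂` and `x₁x₃` has `k` edges on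
`k - 1` vertices, so it is not a `k`-cycle and is independent in the sparse paving matroid; a star
at `x₀` with `k + 1` edges is independent in the cycle matroid. Augmenting the former from the
latter in `M` adds an edge `x₀b` with `b` off the path, and the resulting `k + 1` edges lie in
`C ∪ C'`, where `C` is the `k`-cycle `x₀ x₁ ⋯ x_{k-2} b` and `C'` is `C` with `x₁, x₂` exchanged.
But two distinct circuits `C, C'` always satisfy `r(C ∪ C') ≤ |C ∪ C'| - 2 = k`.
-/

open Function

lemma ZMod.natCast_ne_zero_of_lt {a k : ℕ} (ha : a ≠ 0) (hak : a < k) : (a : ZMod k) ≠ 0 := by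
  rw [Ne, ZMod.natCast_eq_zero_iff]
  exact Nat.not_dvd_of_pos_of_lt (Nat.pos_of_ne_zero ha) hak

lemma ZMod.apply_eq_of_forall_apply_add_one_eq {k : ℕ} [NeZero k] {β : Type*} {g : ZMod k → β}
    (hg : ∀ t, g (t + 1) = g t) (s t : ZMod k) : g s = g t := by
  have hshift : ∀ m : ℕ, g (t + m) = g t := by
    intro m
    induction m with
    | zero => simp
    | succ m ih => rw [Nat.cast_succ, ← add_assoc, hg, ih]
  rw [← hshift (s - t).val, ZMod.natCast_zmod_val, add_sub_cancel]

namespace Matroid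

variable {M : Matroid α} {C C₁ C₂ I : Set α}

lemma isCircuit'_iff : M.IsCircuit' C ↔ M.IsCircuit C := by
  rw [isCircuit_iff_dep_forall_sdiff_singleton_indep, Dep, IsCircuit']
  tauto

lemma IsCircuit.encard_add_two_le_of_indep (h₁ : M.IsCircuit C₁) (h₂ : M.IsCircuit C₂)
    (hne : C₁ ≠ C₂) (hI : M.Indep I) (hIC : I ⊆ C₁ ∪ C₂) :
    I.encard + 2 ≤ (C₁ ∪ C₂).encard := by
  obtain ⟨e, he₂, he₁⟩ : ∃ e ∈ C₂, e ∉ C₁ :=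
    not_subset.mp fun h => hne (h₁.eq_of_superset_isCircuit h₂ h)
  obtain ⟨e₀, he₀⟩ := h₁.nonempty
  have he₀e : e₀ ≠ e := fun h => he₁ (h ▸ he₀)
  set W := (C₁ ∪ C₂) \ {e₀, e}
  have hW : W ⊆ M.closure W :=
    M.subset_closure W (sdiff_subset.trans (union_subset h₁.subset_ground h₂.subset_ground))
  have hC₁ : C₁ ⊆ M.closure W := by
    refine (h₁.subset_closure_sdiff_singleton e₀).trans (M.closure_subset_closure ?_)
    rintro y ⟨hy, hye₀⟩
    exact ⟨Or.inl hy, by rintro (rfl | rfl); exacts [hye₀ rfl, he₁ hy]⟩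
  have hC₂ : C₂ ⊆ M.closure W := by
    refine (h₂.subset_closure_sdiff_singleton e).trans
      (M.closure_subset_closure_of_subset_closure ?_)
    rintro y ⟨hy, hye⟩
    by_cases hye₀ : y = e₀
    · exact hC₁ (hye₀ ▸ he₀)
    · exact hW ⟨Or.inr hy, by rintro (rfl | rfl); exacts [hye₀ rfl, hye rfl]⟩
  calc I.encard + 2 ≤ M.eRk (M.closure W) + 2 := by
        gcongr
        exact hI.encard_le_eRk_of_subset (hIC.trans (union_subset hC₁ hC₂))
    _ ≤ W.encard + 2 := by
        rw [eRk_closure_eq]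
        gcongr
        exact M.eRk_le_encard W
    _ = (C₁ ∪ C₂).encard := by
        rw [← encard_pair he₀e,
          encard_sdiff_add_encard_of_subset
          (pair_subset (subset_union_left he₀) (subset_union_right he₂))]

end Matroid

lemma exists_maximal_isXMatroid_ge [Finite α] {E : Set α} {X : Set (Set α)}
    {M₀ : Matroid α} (hM₀ : IsXMatroid E X M₀) :
    ∃ M, IsXMatroid E X M ∧ WeakLE M₀ M ∧ ∀ N, IsXMatroid E X N → WeakLE M N → WeakLE N M := by
  obtain ⟨M, ⟨hM, hM₀M⟩, hmax⟩ := Set.Finite.exists_maximalFor'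
    (fun N : Matroid α => {I | N.Indep I}) {N | IsXMatroid E X N ∧ WeakLE M₀ N} (toFinite _)
    ⟨M₀, hM₀, fun _ => id⟩
  exact ⟨M, hM, hM₀M, fun N hN hMN => hmax ⟨hN, fun I hI => hMN I (hM₀M I hI)⟩ hMN⟩

section linear

variable {K W : Type*} [Field K] [AddCommGroup W] [Module K W] {E : Set α}

lemma LinearIndepOn.encard_le_of_image_subset_span {v : α → W} {I J : Set α}
    (hI : LinearIndepOn K v I) (hJ : LinearIndepOn K v J)
    (hJI : v '' J ⊆ Submodule.span K (v '' I)) : J.encard ≤ I.encard := by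
  rw [← toENat_rank_span_set hI, ← toENat_rank_span_set hJ]
  exact OrderHomClass.mono Cardinal.toENat (Submodule.rank_mono (Submodule.span_le.mpr hJI))

variable (K) in
noncomputable def linearMatroid (hE : E.Finite) (v : α → W) : Matroid α :=
  (IndepMatroid.ofFinite hE (fun I => I ⊆ E ∧ LinearIndepOn K v I)
    ⟨empty_subset E, linearIndepOn_empty K v⟩
    (fun _ _ hJ hIJ => ⟨hIJ.trans hJ.1, hJ.2.mono hIJ⟩)
    (fun I J hI hJ hlt => by
      by_contra! h
      have hspan : v '' J ⊆ Submodule.span K (v '' I) := by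
        rintro _ ⟨e, heJ, rfl⟩
        by_cases heI : e ∈ I
        · exact Submodule.subset_span (mem_image_of_mem v heI)
        · by_contra hv
          exact h e heJ heI (insert_subset (hJ.1 heJ) hI.1)
            ((linearIndepOn_insert heI).mpr ⟨hI.2, hv⟩)
      have hle := hI.2.encard_le_of_image_subset_span hJ.2 hspan
      rw [← (hE.subset hI.1).cast_ncard_eq, ← (hE.subset hJ.1).cast_ncard_eq, Nat.cast_le] at hle
      omega)
    fun _ hI => hI.1).matroid

lemma linearMatroid_indep_iff (hE : E.Finite) (v : α → W) {I : Set α} :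
    (linearMatroid K hE v).Indep I ↔ I ⊆ E ∧ LinearIndepOn K v I := Iff.rfl

end linear

section sparsePaving

variable {E : Set α} {k : ℕ} {X : Set (Set α)}

def IsSparsePavingIndep (E : Set α) (k : ℕ) (X : Set (Set α)) (I : Set α) : Prop :=
  I ⊆ E ∧ I.encard ≤ k ∧ I ∉ X

lemma IsSparsePavingIndep.subset (hXk : ∀ C ∈ X, C.encard = k) {I J : Set α}
    (hJ : IsSparsePavingIndep E k X J) (hIJ : I ⊆ J) : IsSparsePavingIndep E k X I := by
  refine ⟨hIJ.trans hJ.1, (encard_le_encard hIJ).trans hJ.2.1, fun hI => hJ.2.2 ?_⟩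
  have hJI : J.encard ≤ I.encard := hJ.2.1.trans (hXk I hI).ge
  rwa [((finite_of_encard_le_coe hJ.2.1).subset hIJ).eq_of_subset_of_encard_le hIJ hJI] at hI

lemma IsSparsePavingIndep.exists_insert
    (hX : ∀ I a b, a ∉ I → b ∉ I → insert a I ∈ X → insert b I ∈ X → a = b) {I J : Set α}
    (hI : IsSparsePavingIndep E k X I) (hJ : IsSparsePavingIndep E k X J)
    (hlt : I.encard < J.encard) : ∃ e ∈ J, e ∉ I ∧ IsSparsePavingIndep E k X (insert e I) := by
  by_contra! h
  have hcard : ∀ e ∉ I, (insert e I).encard ≤ J.encard := fun e he => by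
    rw [encard_insert_of_notMem he]
    exact Order.add_one_le_of_lt hlt
  have hins : ∀ e ∈ J, e ∉ I → insert e I ∈ X := fun e heJ heI => by
    by_contra heX
    exact h e heJ heI ⟨insert_subset (hJ.1 heJ) hI.1, (hcard e heI).trans hJ.2.1, heX⟩
  obtain ⟨e₁, he₁J, he₁I⟩ := not_subset.mp fun hJI => (encard_le_encard hJI).not_gt hlt
  have hJ₁ : J ⊆ insert e₁ I := fun e heJ => by
    by_cases heI : e ∈ I
    · exact mem_insert_of_mem e₁ heI
    · rw [hX I e e₁ heI he₁I (hins e heJ heI) (hins e₁ he₁J he₁I)]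
      exact mem_insert e₁ I
  have hJeq : J = insert e₁ I :=
    (finite_of_encard_le_coe hJ.2.1).eq_of_subset_of_encard_le hJ₁ (hcard e₁ he₁I)
  exact hJ.2.2 (hJeq ▸ hins e₁ he₁J he₁I)

noncomputable def sparsePavingMatroid (E : Set α) (k : ℕ) (X : Set (Set α)) (hk : k ≠ 0)
    (hXk : ∀ C ∈ X, C.encard = k)
    (hX : ∀ I a b, a ∉ I → b ∉ I → insert a I ∈ X → insert b I ∈ X → a = b) : Matroid α :=
  (IndepMatroid.ofBddAugment E (IsSparsePavingIndep E k X)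
    ⟨empty_subset E, by simp, fun h => hk (by simpa using (hXk ∅ h).symm)⟩
    (fun _ _ hJ hIJ => hJ.subset hXk hIJ) (fun _ _ hI hJ hlt => hI.exists_insert hX hJ hlt)
    ⟨k, fun _ hI => hI.2.1⟩ fun _ hI => hI.1).matroid

variable {hk : k ≠ 0} {hXk : ∀ C ∈ X, C.encard = k}
  {hX : ∀ I a b, a ∉ I → b ∉ I → insert a I ∈ X → insert b I ∈ X → a = b}

lemma sparsePavingMatroid_indep_iff {I : Set α} :
    (sparsePavingMatroid E k X hk hXk hX).Indep I ↔ I ⊆ E ∧ I.encard ≤ k ∧ I ∉ X := Iff.rfl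

lemma sparsePavingMatroid_isXMatroid (hXE : ∀ C ∈ X, C ⊆ E) :
    IsXMatroid E X (sparsePavingMatroid E k X hk hXk hX) := by
  refine ⟨rfl, fun C hC => ⟨hXE C hC, fun h => h.2.2 hC, fun e he => ?_⟩⟩
  have hCe : (C \ {e}).encard + 1 = k := by
    rw [← hXk C hC, ← encard_singleton e,
      encard_sdiff_add_encard_of_subset (singleton_subset_iff.2 he)]
  refine ⟨sdiff_subset.trans (hXE C hC), ?_, fun h => ?_⟩
  · rw [← hCe]; exact le_self_add
  · rw [hXk _ h] at hCe
    exact absurd hCe (by norm_cast; omega)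

end sparsePaving

section cycles

variable {V : Type*} {k : ℕ}

abbrev cycleEdge (f : ZMod k ↪ V) (i : ZMod k) : Sym2 V := s(f i, f (i + 1))

lemma cycleEdge_injective (hk : 3 ≤ k) (f : ZMod k ↪ V) : Injective (cycleEdge f) := by
  intro i j hij
  rcases Sym2.eq_iff.mp hij with ⟨h, -⟩ | ⟨h₁, h₂⟩
  · exact f.injective h
  · have h₁ := f.injective h₁
    have h₂ := f.injective h₂
    have h₀ : ((2 : ℕ) : ZMod k) = 0 := by push_cast; linear_combination h₂ - h₁
    exact absurd h₀ (ZMod.natCast_ne_zero_of_lt two_ne_zero (by omega))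

lemma range_cycleEdge_subset_edgeSet (hk : 2 ≤ k) (f : ZMod k ↪ V) :
    range (cycleEdge f) ⊆ (⊤ : SimpleGraph V).edgeSet := by
  rintro _ ⟨i, rfl⟩
  simp only [SimpleGraph.mem_edgeSet, SimpleGraph.top_adj, Ne, f.injective.eq_iff, left_eq_add]
  exact_mod_cast ZMod.natCast_ne_zero_of_lt (k := k) (a := 1) one_ne_zero (by omega)

lemma encard_range_cycleEdge (hk : 3 ≤ k) (f : ZMod k ↪ V) :
    (range (cycleEdge f)).encard = k := by
  have : NeZero k := ⟨by omega⟩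
  rw [← image_univ, (cycleEdge_injective hk f).encard_image, encard_univ,
    ENat.card_eq_coe_natCard, Nat.card_zmod]

def cycleSwap (f : ZMod k ↪ V) : ZMod k ↪ V := (Equiv.swap (1 : ZMod k) 2).toEmbedding.trans f

lemma range_cycleEdge_union_cycleSwap (hk : 3 ≤ k) (f : ZMod k ↪ V) :
    range (cycleEdge f) ∪ range (cycleEdge (cycleSwap f)) =
      range (cycleEdge f) ∪ {s(f 0, f 2), s(f 1, f 3)} := by
  have h₁ : (1 : ZMod k) ≠ 0 := by
    exact_mod_cast ZMod.natCast_ne_zero_of_lt (k := k) (a := 1) one_ne_zero (by omega)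
  have h₂ : (2 : ZMod k) ≠ 0 := by
    exact_mod_cast ZMod.natCast_ne_zero_of_lt (k := k) (a := 2) two_ne_zero (by omega)
  have h₀ : cycleEdge (cycleSwap f) 0 = s(f 0, f 2) := by
    rw [cycleEdge, cycleSwap, Embedding.trans_apply, Embedding.trans_apply, Equiv.coe_toEmbedding,
      zero_add, Equiv.swap_apply_left, Equiv.swap_apply_of_ne_of_ne h₁.symm h₂.symm]
  have h₃ : cycleEdge (cycleSwap f) 2 = s(f 1, f 3) := by
    rw [cycleEdge, cycleSwap, Embedding.trans_apply, Embedding.trans_apply, Equiv.coe_toEmbedding,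
      show (2 : ZMod k) + 1 = 3 by norm_num, Equiv.swap_apply_right,
      Equiv.swap_apply_of_ne_of_ne (fun h => h₂ (by linear_combination h))
        (fun h => h₁ (by linear_combination h))]
  refine subset_antisymm (union_subset subset_union_left ?_) (union_subset_union_right _ ?_)
  · rintro _ ⟨i, rfl⟩
    by_cases hi₀ : i = 0
    · exact Or.inr (Or.inl (hi₀ ▸ h₀))
    by_cases hi₂ : i = 2
    · exact Or.inr (Or.inr (hi₂ ▸ h₃))
    refine Or.inl ⟨if i = 1 then 1 else i, ?_⟩
    simp only [cycleEdge, cycleSwap, Embedding.trans_apply, Equiv.coe_toEmbedding]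
    split_ifs with hi₁
    · rw [hi₁, one_add_one_eq_two, Equiv.swap_apply_left, Equiv.swap_apply_right, Sym2.eq_swap]
    · rw [Equiv.swap_apply_of_ne_of_ne hi₁ hi₂, Equiv.swap_apply_of_ne_of_ne
        (fun h => hi₀ (by linear_combination h)) (fun h => hi₁ (by linear_combination h))]
  · rintro _ (rfl | rfl)
    exacts [⟨0, h₀⟩, ⟨2, h₃⟩]

end cycles

section incidence

variable {V : Type*} [DecidableEq V] {k : ℕ}

noncomputable def incVec : Sym2 V → V → ZMod 2 :=
  Sym2.lift ⟨fun a b => Pi.single a 1 + Pi.single b 1, fun _ _ => add_comm _ _⟩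

@[simp] lemma incVec_mk (a b : V) : incVec s(a, b) = Pi.single a 1 + Pi.single b 1 := rfl

lemma incVec_apply_ne_zero_iff {e : Sym2 V} (he : ¬ e.IsDiag) (x : V) :
    incVec e x ≠ 0 ↔ x ∈ e := by
  induction e using Sym2.ind with
  | h a b =>
    have hab : a ≠ b := by simpa using he
    by_cases hxa : x = a <;> by_cases hxb : x = b <;> simp_all

lemma incVec_injOn : InjOn (incVec (V := V)) (⊤ : SimpleGraph V).edgeSet :=
  fun e he e' he' h => Sym2.ext fun x => by
    rw [SimpleGraph.edgeSet_top] at he he'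
    rw [← incVec_apply_ne_zero_iff he, ← incVec_apply_ne_zero_iff he', h]

lemma linearIndepOn_incVec_star [Finite V] (v : V) {W : Set V} (hv : v ∉ W) :
    LinearIndepOn (ZMod 2) incVec ((fun w => s(v, w)) '' W) := by
  lift W to Finset V using toFinite W
  refine LinearIndepOn.image_of_comp _ _ (linearIndepOn_finset_iff.mpr fun c hc w hw => ?_)
  have hwv : w ≠ v := fun h => hv (h ▸ hw)
  simpa [Finset.sum_apply, Pi.single_apply, hwv, hw] using congrFun hc w

lemma sum_incVec_cycleEdge [NeZero k] (f : ZMod k ↪ V) : ∑ i, incVec (cycleEdge f i) = 0 := by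
  simp only [cycleEdge, incVec_mk, Finset.sum_add_distrib]
  rw [Fintype.sum_equiv (Equiv.addRight 1) (fun i => (Pi.single (f (i + 1)) 1 : V → ZMod 2))
    (fun i => Pi.single (f i) 1) fun _ => rfl]
  exact ZModModule.add_self _

lemma sum_smul_incVec_cycleEdge_apply [NeZero k] (f : ZMod k ↪ V) (c : ZMod k → ZMod 2)
    (t : ZMod k) : (∑ i, c i • incVec (cycleEdge f i)) (f t) = c t + c (t - 1) := by
  have ht : ∀ i, t = i + 1 ↔ i = t - 1 := fun i => by rw [eq_comm, eq_sub_iff_add_eq]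
  simp [Finset.sum_apply, Pi.single_apply, f.injective.eq_iff, Finset.sum_add_distrib, ht]

lemma linearIndepOn_incVec_range_cycleEdge_sdiff (hk : 3 ≤ k) (f : ZMod k ↪ V) (i₀ : ZMod k) :
    LinearIndepOn (ZMod 2) incVec (range (cycleEdge f) \ {cycleEdge f i₀}) := by
  have : NeZero k := ⟨by omega⟩
  rw [← image_univ, ← image_singleton, ← image_sdiff (cycleEdge_injective hk f), ← Finset.coe_univ,
    ← Finset.coe_singleton, ← Finset.coe_sdiff]
  refine LinearIndepOn.image_of_comp _ _ (linearIndepOn_finset_iff.mpr fun c hc i hi => ?_)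
  set c' : ZMod k → ZMod 2 := fun j => if j = i₀ then 0 else c j
  have hsum : ∑ j, c' j • incVec (cycleEdge f j) = 0 := by
    rw [← hc, ← Finset.sum_sdiff (Finset.subset_univ {i₀}), Finset.sum_singleton]
    simp only [c', if_pos rfl, zero_smul, add_zero]
    exact Finset.sum_congr rfl fun j hj => by rw [if_neg (by simpa using hj)]; rfl
  -- Only the edges `t` and `t + 1` meet the vertex `f (t + 1)`.
  have hstep : ∀ t, c' (t + 1) = c' t := fun t => by
    have := congrFun hsum (f (t + 1))
    rwa [sum_smul_incVec_cycleEdge_apply, add_sub_cancel_right, Pi.zero_apply,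
      CharTwo.add_eq_zero] at this
  have hi₀ : i ≠ i₀ := by simpa using hi
  simpa [c', hi₀] using ZMod.apply_eq_of_forall_apply_add_one_eq hstep i i₀

end incidence

section completeGraph

variable {n k : ℕ}

lemma encard_of_mem_cycleCopies (hk : 3 ≤ k) {C : Set (Sym2 (Fin n))}
    (hC : C ∈ cycleCopies n k) : C.encard = k := by
  obtain ⟨f, rfl⟩ := hC
  exact encard_range_cycleEdge hk f

lemma subset_edgeSet_of_mem_cycleCopies (hk : 2 ≤ k) {C : Set (Sym2 (Fin n))}
    (hC : C ∈ cycleCopies n k) : C ⊆ (⊤ : SimpleGraph (Fin n)).edgeSet := by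
  obtain ⟨f, rfl⟩ := hC
  exact range_cycleEdge_subset_edgeSet hk f

lemma le_encard_of_mem_cycleCopies [NeZero k] {C : Set (Sym2 (Fin n))} (hC : C ∈ cycleCopies n k)
    {S : Set (Fin n)} (hS : ∀ e ∈ C, ∀ v ∈ e, v ∈ S) : k ≤ S.encard := by
  obtain ⟨f, rfl⟩ := hC
  calc (k : ℕ∞) = (range f).encard := by
        rw [← image_univ, f.injective.encard_image, encard_univ, ENat.card_eq_coe_natCard,
          Nat.card_zmod]
    _ ≤ S.encard := encard_le_encard (by
        rintro _ ⟨i, rfl⟩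
        exact hS _ ⟨i, rfl⟩ _ (Sym2.mem_mk_left _ _))

lemma finsum_mem_incVec_of_mem_cycleCopies (hk : 3 ≤ k) {C : Set (Sym2 (Fin n))}
    (hC : C ∈ cycleCopies n k) : ∑ᶠ e ∈ C, incVec e = 0 := by
  have : NeZero k := ⟨by omega⟩
  obtain ⟨f, rfl⟩ := hC
  rw [finsum_mem_range (cycleEdge_injective hk f), finsum_eq_sum_of_fintype]
  exact sum_incVec_cycleEdge f

lemma eq_of_insert_mem_cycleCopies (hk : 3 ≤ k) {I : Set (Sym2 (Fin n))} {a b : Sym2 (Fin n)}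
    (ha : a ∉ I) (hb : b ∉ I) (hIa : insert a I ∈ cycleCopies n k)
    (hIb : insert b I ∈ cycleCopies n k) : a = b := by
  -- `incVec a` and `incVec b` both equal the sum of the incidence vectors of `I`.
  have hsa := finsum_mem_incVec_of_mem_cycleCopies hk hIa
  have hsb := finsum_mem_incVec_of_mem_cycleCopies hk hIb
  rw [finsum_mem_insert _ ha (toFinite I)] at hsa
  rw [finsum_mem_insert _ hb (toFinite I)] at hsb
  exact incVec_injOn (subset_edgeSet_of_mem_cycleCopies (by omega) hIa (mem_insert a I))
    (subset_edgeSet_of_mem_cycleCopies (by omega) hIb (mem_insert b I))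
    (add_right_cancel (hsa.trans hsb.symm))

/-- The edge sets of forests are exactly those whose GF(2) incidence vectors are linearly
independent, so this is the cycle matroid of the complete graph on `V`. -/
noncomputable def completeCycleMatroid (V : Type*) [Finite V] [DecidableEq V] :
    Matroid (Sym2 V) :=
  linearMatroid (ZMod 2) (toFinite (⊤ : SimpleGraph V).edgeSet) incVec

lemma completeCycleMatroid_indep_iff {V : Type*} [Finite V] [DecidableEq V] {I : Set (Sym2 V)} :
    (completeCycleMatroid V).Indep I ↔
      I ⊆ (⊤ : SimpleGraph V).edgeSet ∧ LinearIndepOn (ZMod 2) incVec I :=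
  linearMatroid_indep_iff _ _

lemma completeCycleMatroid_isXMatroid (hk : 3 ≤ k) :
    IsXMatroid (⊤ : SimpleGraph (Fin n)).edgeSet (cycleCopies n k)
      (completeCycleMatroid (Fin n)) := by
  have : NeZero k := ⟨by omega⟩
  refine ⟨rfl, ?_⟩
  rintro _ ⟨f, rfl⟩
  refine ⟨range_cycleEdge_subset_edgeSet (by omega) f, fun h => ?_, ?_⟩
  · have hli := (linearIndepOn_range_iff (cycleEdge_injective hk f) incVec).mp
      (completeCycleMatroid_indep_iff.mp h).2
    exact Fintype.not_linearIndependent_iff.mpr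
      ⟨1, by simpa using sum_incVec_cycleEdge f, 0, one_ne_zero⟩ hli
  · rintro _ ⟨i₀, rfl⟩
    exact completeCycleMatroid_indep_iff.mpr ⟨sdiff_subset.trans
      (range_cycleEdge_subset_edgeSet (by omega) f),
      linearIndepOn_incVec_range_cycleEdge_sdiff hk f i₀⟩

noncomputable def cycleSparsePavingMatroid (n k : ℕ) (hk : 3 ≤ k) : Matroid (Sym2 (Fin n)) :=
  sparsePavingMatroid (⊤ : SimpleGraph (Fin n)).edgeSet k (cycleCopies n k) (by omega)
    (fun _ => encard_of_mem_cycleCopies hk) fun _ _ _ => eq_of_insert_mem_cycleCopies hk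

lemma cycleSparsePavingMatroid_isXMatroid (hk : 3 ≤ k) :
    IsXMatroid (⊤ : SimpleGraph (Fin n)).edgeSet (cycleCopies n k)
      (cycleSparsePavingMatroid n k hk) :=
  sparsePavingMatroid_isXMatroid fun _ => subset_edgeSet_of_mem_cycleCopies (by omega)

lemma cycleSparsePavingMatroid_indep_iff (hk : 3 ≤ k) {I : Set (Sym2 (Fin n))} :
    (cycleSparsePavingMatroid n k hk).Indep I ↔
      I ⊆ (⊤ : SimpleGraph (Fin n)).edgeSet ∧ I.encard ≤ k ∧ I ∉ cycleCopies n k :=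
  sparsePavingMatroid_indep_iff

theorem encard_le_of_indep_subset_cycle_union_chords (hk : 3 ≤ k) {N : Matroid (Sym2 (Fin n))}
    (hN : ∀ C ∈ cycleCopies n k, N.IsCircuit' C) (f : ZMod k ↪ Fin n) {A : Set (Sym2 (Fin n))}
    (hA : N.Indep A) (hAf : A ⊆ range (cycleEdge f) ∪ {s(f 0, f 2), s(f 1, f 3)}) :
    A.encard ≤ k := by
  rw [← range_cycleEdge_union_cycleSwap hk] at hAf
  by_cases heq : range (cycleEdge f) = range (cycleEdge (cycleSwap f))
  · rw [heq, union_self] at hAf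
    exact (encard_le_encard hAf).trans (encard_range_cycleEdge hk _).le
  have h := (Matroid.isCircuit'_iff.mp (hN _ ⟨f, rfl⟩)).encard_add_two_le_of_indep
    (Matroid.isCircuit'_iff.mp (hN _ ⟨cycleSwap f, rfl⟩)) heq hA hAf
  rw [range_cycleEdge_union_cycleSwap hk] at h
  have hchords : ({s(f 0, f 2), s(f 1, f 3)} : Set (Sym2 (Fin n))).encard ≤ 2 :=
    (encard_insert_le _ _).trans (by rw [encard_singleton]; rfl)
  have h' := h.trans ((encard_union_le _ _).trans
    (add_le_add (encard_range_cycleEdge hk f).le hchords))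
  exact (ENat.add_le_add_iff_right (by simp)).mp h'

end completeGraph

section configuration

variable {V : Type*}

def coreSet (x : ℕ → V) (k : ℕ) : Set (Sym2 V) :=
  (fun j => s(x j, x (j + 1))) '' Iio (k - 2) ∪ {s(x 0, x 2), s(x 1, x 3)}

def starIndices (k : ℕ) : Set ℕ := insert 1 (insert 2 (Ico (k - 1) (2 * k - 2)))

def starSet (x : ℕ → V) (k : ℕ) : Set (Sym2 V) := (fun w => s(x 0, w)) '' (x '' starIndices k)

variable {x : ℕ → V} {k m : ℕ}

lemma sym2_eq_iff_of_injOn (hx : InjOn x (Iio m)) {a b c d : ℕ} (ha : a < m) (hb : b < m)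
    (hc : c < m) (hd : d < m) : s(x a, x b) = s(x c, x d) ↔ a = c ∧ b = d ∨ a = d ∧ b = c := by
  simp only [Sym2.eq_iff, hx.eq_iff ha hc, hx.eq_iff hb hd, hx.eq_iff ha hd, hx.eq_iff hb hc]

lemma mk_mem_edgeSet_top_of_injOn (hx : InjOn x (Iio m)) {a b : ℕ} (ha : a < m) (hb : b < m)
    (hab : a ≠ b) : s(x a, x b) ∈ (⊤ : SimpleGraph V).edgeSet := by
  simpa using fun h => hab (hx ha hb h)

lemma mem_image_of_mem_coreSet (hk : 5 ≤ k) {e : Sym2 V} (he : e ∈ coreSet x k) {v : V}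
    (hv : v ∈ e) : v ∈ x '' Iio (k - 1) := by
  rcases he with ⟨j, hj, rfl⟩ | he
  · rw [mem_Iio] at hj
    rcases Sym2.mem_iff.mp hv with rfl | rfl
    exacts [⟨j, mem_Iio.mpr (by omega), rfl⟩, ⟨j + 1, mem_Iio.mpr (by omega), rfl⟩]
  · rcases he with rfl | rfl <;> rcases Sym2.mem_iff.mp hv with rfl | rfl <;>
      exact ⟨_, mem_Iio.mpr (by omega), rfl⟩

lemma coreSet_subset_edgeSet (hk : 5 ≤ k) (hx : InjOn x (Iio (2 * k - 2))) :
    coreSet x k ⊆ (⊤ : SimpleGraph V).edgeSet := by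
  rintro _ (⟨j, hj, rfl⟩ | he)
  · rw [mem_Iio] at hj
    exact mk_mem_edgeSet_top_of_injOn hx (by omega) (by omega) (by omega)
  · rcases he with rfl | rfl <;>
      exact mk_mem_edgeSet_top_of_injOn hx (by omega) (by omega) (by omega)

lemma encard_coreSet (hk : 5 ≤ k) (hx : InjOn x (Iio (2 * k - 2))) :
    (coreSet x k).encard = k := by
  have hpath : InjOn (fun j => s(x j, x (j + 1))) (Iio (k - 2)) := fun i hi j hj h => by
    rw [mem_Iio] at hi hj
    rw [sym2_eq_iff_of_injOn hx (by omega) (by omega) (by omega) (by omega)] at h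
    omega
  have hdisj : Disjoint ((fun j => s(x j, x (j + 1))) '' Iio (k - 2))
      {s(x 0, x 2), s(x 1, x 3)} := by
    rw [disjoint_right]
    rintro _ (rfl | rfl) ⟨j, hj, h⟩ <;> rw [mem_Iio] at hj <;>
      rw [sym2_eq_iff_of_injOn hx (by omega) (by omega) (by omega) (by omega)] at h <;> omega
  have hchords : s(x 0, x 2) ≠ s(x 1, x 3) := by
    rw [Ne, sym2_eq_iff_of_injOn hx (by omega) (by omega) (by omega) (by omega)]
    omega
  rw [coreSet, encard_union_eq hdisj, hpath.encard_image, encard_pair hchords,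
    ← (finite_Iio _).cast_ncard_eq, ncard_Iio_nat]
  norm_cast
  omega

lemma coreSet_notMem_cycleCopies {n : ℕ} {x : ℕ → Fin n} (hk : 5 ≤ k) :
    coreSet x k ∉ cycleCopies n k := fun hC => by
  have : NeZero k := ⟨by omega⟩
  have hle := (le_encard_of_mem_cycleCopies hC fun _ he _ hv =>
    mem_image_of_mem_coreSet hk he hv).trans ((encard_image_le x _).trans_eq
      (by rw [← (finite_Iio _).cast_ncard_eq, ncard_Iio_nat]))
  norm_cast at hle
  omega

lemma bounds_of_mem_starIndices (hk : 5 ≤ k) {j : ℕ} (hj : j ∈ starIndices k) :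
    1 ≤ j ∧ j < 2 * k - 2 := by
  rcases hj with rfl | rfl | ⟨h₁, h₂⟩ <;> omega

lemma encard_starSet (hk : 5 ≤ k) (hx : InjOn x (Iio (2 * k - 2))) :
    (starSet x k).encard = k + 1 := by
  have hS : (starIndices k).encard = k + 1 := by
    rw [starIndices, encard_insert_of_notMem (by simp; omega),
      encard_insert_of_notMem (by simp; omega), ← (finite_Ico _ _).cast_ncard_eq, ncard_Ico_nat]
    norm_cast
    omega
  have hstar : Injective fun w => s(x 0, w) := fun _ _ h => Sym2.congr_right.mp h
  rw [starSet, hstar.encard_image,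
    (hx.mono fun j hj => mem_Iio.mpr (bounds_of_mem_starIndices hk hj).2).encard_image, hS]

lemma starSet_subset_edgeSet (hk : 5 ≤ k) (hx : InjOn x (Iio (2 * k - 2))) :
    starSet x k ⊆ (⊤ : SimpleGraph V).edgeSet := by
  rintro _ ⟨_, ⟨j, hj, rfl⟩, rfl⟩
  have := bounds_of_mem_starIndices hk hj
  exact mk_mem_edgeSet_top_of_injOn hx (by omega) this.2 (by omega)

lemma linearIndepOn_starSet [Finite V] [DecidableEq V] (hk : 5 ≤ k)
    (hx : InjOn x (Iio (2 * k - 2))) : LinearIndepOn (ZMod 2) incVec (starSet x k) := by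
  refine linearIndepOn_incVec_star (x 0) fun ⟨j, hj, h⟩ => ?_
  have := bounds_of_mem_starIndices hk hj
  have := hx (mem_Iio.mpr this.2) (mem_Iio.mpr (by omega)) h
  omega

lemma exists_of_mem_starSet_sdiff_coreSet (hk : 5 ≤ k) {e : Sym2 V}
    (he : e ∈ starSet x k \ coreSet x k) : ∃ j, k - 1 ≤ j ∧ j < 2 * k - 2 ∧ e = s(x 0, x j) := by
  obtain ⟨⟨_, ⟨j, hj, rfl⟩, rfl⟩, hcore⟩ := he
  rcases hj with rfl | rfl | ⟨h₁, h₂⟩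
  · exact absurd (Or.inl ⟨0, mem_Iio.mpr (by omega), rfl⟩) hcore
  · exact absurd (Or.inr (Or.inl rfl)) hcore
  · exact ⟨j, h₁, h₂, rfl⟩

lemma exists_cycle_through [NeZero k] (hx : InjOn x (Iio (k - 1))) {b : V}
    (hb : b ∉ x '' Iio (k - 1)) : ∃ f : ZMod k ↪ V, (∀ j < k - 1, f j = x j) ∧ f (-1) = b := by
  have hneg : (-1 : ZMod k).val = k - 1 := by
    obtain ⟨m, rfl⟩ : ∃ m, k = m + 1 := ⟨k - 1, by have := NeZero.pos k; omega⟩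
    exact ZMod.val_neg_one m
  refine ⟨⟨fun i => if i.val < k - 1 then x i.val else b, ?_⟩, fun j hj => ?_, ?_⟩
  · intro i i' h
    have := i.val_lt
    have := i'.val_lt
    simp only at h
    split_ifs at h with hi hi' hi'
    · exact ZMod.val_injective k (hx hi hi' h)
    · exact absurd ⟨_, hi, h⟩ hb
    · exact absurd ⟨_, hi', h.symm⟩ hb
    · exact ZMod.val_injective k (by omega)
  · show (if _ then _ else _) = _
    rw [ZMod.val_cast_of_lt (show j < k by omega), if_pos hj]
  · show (if _ then _ else _) = _
    rw [hneg, if_neg (lt_irrefl _)]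

lemma insert_coreSet_subset (hk : 5 ≤ k) {f : ZMod k ↪ V} (hf : ∀ j < k - 1, f j = x j) :
    insert s(x 0, f (-1)) (coreSet x k) ⊆ range (cycleEdge f) ∪ {s(f 0, f 2), s(f 1, f 3)} := by
  have h₀ : f 0 = x 0 := by simpa using hf 0 (by omega)
  have h₁ : f 1 = x 1 := by simpa using hf 1 (by omega)
  have h₂ : f 2 = x 2 := by simpa using hf 2 (by omega)
  have h₃ : f 3 = x 3 := by simpa using hf 3 (by omega)
  rintro e (rfl | ⟨j, hj, rfl⟩ | hchord)
  · exact Or.inl ⟨-1, by rw [cycleEdge, neg_add_cancel, h₀, Sym2.eq_swap]⟩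
  · rw [mem_Iio] at hj
    refine Or.inl ⟨j, ?_⟩
    rw [cycleEdge, hf j (by omega), ← Nat.cast_succ, hf (j + 1) (by omega)]
  · rw [h₀, h₁, h₂, h₃]
    exact Or.inr hchord

end configuration

theorem not_indep_coreSet_and_starSet {n k : ℕ} {x : ℕ → Fin n} (hk : 5 ≤ k)
    (hx : InjOn x (Iio (2 * k - 2))) {M : Matroid (Sym2 (Fin n))}
    (hM : ∀ C ∈ cycleCopies n k, M.IsCircuit' C) (h₁ : M.Indep (coreSet x k))
    (h₂ : M.Indep (starSet x k)) : False := by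
  have : NeZero k := ⟨by omega⟩
  obtain ⟨e, he, hMe⟩ := h₁.augment h₂ (by
    rw [encard_coreSet hk hx, encard_starSet hk hx]
    exact_mod_cast Nat.lt_succ_self k)
  obtain ⟨j, hj₁, hj₂, rfl⟩ := exists_of_mem_starSet_sdiff_coreSet hk he
  have hxj : x j ∉ x '' Iio (k - 1) := by
    rintro ⟨i, hi, h⟩
    rw [mem_Iio] at hi
    have := hx (mem_Iio.mpr (by omega)) (mem_Iio.mpr (by omega)) h
    omega
  obtain ⟨f, hf, hfj⟩ := exists_cycle_through (hx.mono (Iio_subset_Iio (by omega))) hxj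
  have hle := encard_le_of_indep_subset_cycle_union_chords (by omega) hM f hMe
    (by rw [← hfj]; exact insert_coreSet_subset hk hf)
  rw [encard_insert_of_notMem he.2, encard_coreSet hk hx] at hle
  exact absurd hle (by norm_cast; omega)

lemma two_mul_sub_two_le_choose {k : ℕ} (hk : 5 ≤ k) : 2 * k - 2 ≤ (k - 1).choose 2 + 2 := by
  rw [Nat.choose_two_right]
  have : 4 * (k - 1 - 1) ≤ (k - 1) * (k - 1 - 1) := Nat.mul_le_mul_right _ (by omega)
  omega

lemma Fin.injOn_ofNat_Iio (n : ℕ) [NeZero n] : InjOn (Fin.ofNat n) (Iio n) := fun a ha b hb h => by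
  simpa [Nat.mod_eq_of_lt (mem_Iio.mp ha), Nat.mod_eq_of_lt (mem_Iio.mp hb)] using
    congrArg Fin.val h

theorem two_maximal_Ck_matroids (k n : ℕ) (hk : 5 ≤ k) (hn : (k - 1).choose 2 + 2 ≤ n) :
    ∃ M₁ M₂ : Matroid (Sym2 (Fin n)), M₁ ≠ M₂ ∧
      (IsXMatroid (⊤ : SimpleGraph (Fin n)).edgeSet (cycleCopies n k) M₁ ∧
        ∀ N : Matroid (Sym2 (Fin n)),
          IsXMatroid (⊤ : SimpleGraph (Fin n)).edgeSet (cycleCopies n k) N →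
            WeakLE M₁ N → WeakLE N M₁) ∧
      (IsXMatroid (⊤ : SimpleGraph (Fin n)).edgeSet (cycleCopies n k) M₂ ∧
        ∀ N : Matroid (Sym2 (Fin n)),
          IsXMatroid (⊤ : SimpleGraph (Fin n)).edgeSet (cycleCopies n k) N →
            WeakLE M₂ N → WeakLE N M₂) := by
  have hkn : 2 * k - 2 ≤ n := (two_mul_sub_two_le_choose hk).trans hn
  have : NeZero n := ⟨by omega⟩
  have hx : InjOn (Fin.ofNat n) (Iio (2 * k - 2)) :=
    (Fin.injOn_ofNat_Iio n).mono (Iio_subset_Iio hkn)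
  obtain ⟨M₁, hM₁, hcycle, hmax₁⟩ :=
    exists_maximal_isXMatroid_ge (completeCycleMatroid_isXMatroid (n := n) (by omega : 3 ≤ k))
  obtain ⟨M₂, hM₂, hsparse, hmax₂⟩ :=
    exists_maximal_isXMatroid_ge (cycleSparsePavingMatroid_isXMatroid (n := n) (by omega : 3 ≤ k))
  refine ⟨M₁, M₂, ?_, ⟨hM₁, hmax₁⟩, hM₂, hmax₂⟩
  rintro rfl
  exact not_indep_coreSet_and_starSet hk hx hM₁.2
    (hsparse _ ((cycleSparsePavingMatroid_indep_iff _).mpr ⟨coreSet_subset_edgeSet hk hx,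
      (encard_coreSet hk hx).le, coreSet_notMem_cycleCopies hk⟩))
    (hcycle _ (completeCycleMatroid_indep_iff.mpr
      ⟨starSet_subset_edgeSet hk hx, linearIndepOn_starSet hk hx⟩))
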